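/- (Hammock region for ℤB_{n+1}; Figure 7) Fix n ≥ 1 and a vertex x = (p,r) of the valued translation quiver Q realizing ℤB_{n+1}. Then H(x) equals the union of the two sets { (q,s) ∈ ℤ × {0,…,n} : p−n ≤ q ≤ p+r−n and p+r−n ≤ q+s ≤ p+r } and { (q,s) ∈ ℤ × {0,…,n} : p+r−n < q ≤ p and p ≤ q+s ≤ p+r }. -/
import Mathlib


/-- Valued sum over the arrows `y → v` of the valued translation quiver realizing
`ℤB_{n+1}`: the vertex set is `ℤ × {0,…,n}`, with arrows `(q,s) → (q,s+1)` for
`s < n` and `(q,s) → (q+1,s-1)` for `0 < s`; each arrow `(q,n-1) → (q,n)` carries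
valuation `(2,1)` and each arrow `(q,n) → (q+1,n-1)` carries valuation `(1,2)`,
all other arrows carry valuation `(1,1)`. Here each summand `f v` is weighted
by the first component of the valuation of the arrow `y → v`. -/
def stepB (n : ℕ) (f : ℤ × ℕ → ℕ) (y : ℤ × ℕ) : ℤ :=
  (if y.2 < n then (if y.2 = n - 1 then 2 else 1) * (f (y.1, y.2 + 1) : ℤ) else 0) +
    (if 0 < y.2 then (f (y.1 + 1, y.2 - 1) : ℤ) else 0)

/-- `hB n x k y` is `h_k(y,x)` for `ℤB_{n+1}`: `h_0(y,x) = δ(y,x)` and, for `k > 0`,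
`h_k(y,x) = max(h'_k(y,x), 0)` where
`h'_k(y,x) = ∑_{α : y → v} d_α · h_{k-1}(v,x) - h_{k-2}(τ⁻¹ y, x)` and
`τ⁻¹(q,s) = (q+1,s)`. -/
def hB (n : ℕ) (x : ℤ × ℕ) : ℕ → ℤ × ℕ → ℕ
  | 0 => fun y => if y = x then 1 else 0
  | 1 => fun y => (stepB n (hB n x 0) y).toNat
  | k + 2 => fun y =>
      (stepB n (hB n x (k + 1)) y - (hB n x k (y.1 + 1, y.2) : ℤ)).toNat

/-- `h'B n x k y` is `h'_k(y,x)` for `ℤB_{n+1}` (meaningful for `k ≥ 1`). -/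
def h'B (n : ℕ) (x : ℤ × ℕ) (k : ℕ) (y : ℤ × ℕ) : ℤ :=
  stepB n (hB n x (k - 1)) y -
    (if 2 ≤ k then (hB n x (k - 2) (y.1 + 1, y.2) : ℤ) else 0)

/-- `hTotB n y x = h(y,x) = ∑_{k ≥ 0} h_k(y,x)` for `ℤB_{n+1}`. -/
noncomputable def hTotB (n : ℕ) (y x : ℤ × ℕ) : ℕ := ∑ᶠ k : ℕ, hB n x k y

/-- Explicit formula for `hB`. -/
def Hk (n : ℕ) (p : ℤ) (r : ℕ) (k : ℕ) (y : ℤ × ℕ) : ℕ :=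
  if (k : ℤ) = 2 * p + r - 2 * y.1 - y.2 ∧
      ((p - n ≤ y.1 ∧ y.1 ≤ p + r - n ∧ p + r - (n : ℤ) ≤ y.1 + y.2 ∧ y.1 + (y.2 : ℤ) ≤ p + r) ∨
       (p + r - (n : ℤ) < y.1 ∧ y.1 ≤ p ∧ p ≤ y.1 + (y.2 : ℤ) ∧ y.1 + (y.2 : ℤ) ≤ p + r)) then
    (if y.1 ≤ p + r - (n : ℤ) ∧ y.2 < n ∧ p ≤ y.1 + (y.2 : ℤ) then 2 else 1)
  else 0

lemma stepB_mk (n : ℕ) (f : ℤ × ℕ → ℕ) (q : ℤ) (s : ℕ) :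
    stepB n f (q, s) =
      (if s < n then (if s = n - 1 then 2 else 1) * (f (q, s + 1) : ℤ) else 0) +
        (if 0 < s then (f (q + 1, s - 1) : ℤ) else 0) := rfl

lemma Hk_spec (n : ℕ) (p : ℤ) (r : ℕ) (k : ℕ) (q : ℤ) (s : ℕ) :
    ((k : ℤ) = 2 * p + r - 2 * q - s ∧
      ((p - n ≤ q ∧ q ≤ p + r - n ∧ p + r - (n : ℤ) ≤ q + s ∧ q + (s : ℤ) ≤ p + r) ∨
       (p + r - (n : ℤ) < q ∧ q ≤ p ∧ p ≤ q + (s : ℤ) ∧ q + (s : ℤ) ≤ p + r)) ∧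
      ((q ≤ p + r - (n : ℤ) ∧ s < n ∧ p ≤ q + (s : ℤ)) ∧ Hk n p r k (q, s) = 2 ∨
       ¬(q ≤ p + r - (n : ℤ) ∧ s < n ∧ p ≤ q + (s : ℤ)) ∧ Hk n p r k (q, s) = 1)) ∨
    (¬((k : ℤ) = 2 * p + r - 2 * q - s ∧
      ((p - n ≤ q ∧ q ≤ p + r - n ∧ p + r - (n : ℤ) ≤ q + s ∧ q + (s : ℤ) ≤ p + r) ∨
       (p + r - (n : ℤ) < q ∧ q ≤ p ∧ p ≤ q + (s : ℤ) ∧ q + (s : ℤ) ≤ p + r))) ∧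
      Hk n p r k (q, s) = 0) := by
  simp only [Hk]
  split_ifs with h1 h2 <;> omega

lemma Hk_eq_zero {n : ℕ} {p : ℤ} {r : ℕ} {k : ℕ} {q : ℤ} {s : ℕ}
    (h : (k : ℤ) ≠ 2 * p + r - 2 * q - s) : Hk n p r k (q, s) = 0 := by
  simp only [Hk]
  exact if_neg fun hc => h hc.1

attribute [irreducible] Hk

set_option maxHeartbeats 4000000 in
lemma key (n : ℕ) (hn : 1 ≤ n) (p : ℤ) (r : ℕ) (hr : r ≤ n) :
    ∀ k (y : ℤ × ℕ), y.2 ≤ n → hB n (p, r) k y = Hk n p r k y := by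
  intro k
  induction k using Nat.strong_induction_on with
  | _ k ih =>
    obtain _ | _ | m := k
    · rintro ⟨q, s⟩ hy
      have S := Hk_spec n p r 0 q s
      simp only [hB, Prod.mk.injEq]
      split_ifs <;> omega
    · rintro ⟨q, s⟩ hy
      show hB n (p, r) 1 (q, s) = Hk n p r 1 (q, s)
      have S := Hk_spec n p r 1 q s
      simp only [hB, stepB_mk, Prod.mk.injEq]
      split_ifs <;> omega
    · rintro ⟨q, s⟩ hy
      show hB n (p, r) (m + 2) (q, s) = Hk n p r (m + 2) (q, s)
      simp only [hB]
      rw [stepB_mk]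
      rw [ih (m + 1) (by omega) (q + 1, s - 1) (by simp; omega),
        ih m (by omega) (q + 1, s) hy]
      by_cases hsn : s < n
      · rw [if_pos hsn, ih (m + 1) (by omega) (q, s + 1) (by simpa using hsn)]
        by_cases he : (m + 2 : ℤ) = 2 * p + r - 2 * q - s
        · clear ih
          have S0 := Hk_spec n p r (m + 2) q s
          have S1 := Hk_spec n p r (m + 1) (q + 1) (s - 1)
          have S2 := Hk_spec n p r m (q + 1) s
          have S3 := Hk_spec n p r (m + 1) q (s + 1)
          split_ifs with hn1 h0
          · obtain ⟨t, rfl⟩ : ∃ t, s = t + 1 := ⟨s - 1, by omega⟩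
            obtain rfl : n = t + 2 := by omega
            simp only [Nat.add_sub_cancel] at S1 ⊢
            rcases S0 with (⟨k0, r0, ⟨d0, v0⟩|⟨d0, v0⟩⟩|⟨k0, v0⟩) <;>
            rcases S1 with (⟨k1, r1, ⟨d1, v1⟩|⟨d1, v1⟩⟩|⟨k1, v1⟩) <;>
            rcases S2 with (⟨k2, r2, ⟨d2, v2⟩|⟨d2, v2⟩⟩|⟨k2, v2⟩) <;>
            rcases S3 with (⟨k3, r3, ⟨d3, v3⟩|⟨d3, v3⟩⟩|⟨k3, v3⟩) <;>
            omega
          · obtain rfl : s = 0 := by omega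
            obtain rfl : n = 1 := by omega
            clear S1
            rcases S0 with (⟨k0, r0, ⟨d0, v0⟩|⟨d0, v0⟩⟩|⟨k0, v0⟩) <;>
            rcases S2 with (⟨k2, r2, ⟨d2, v2⟩|⟨d2, v2⟩⟩|⟨k2, v2⟩) <;>
            rcases S3 with (⟨k3, r3, ⟨d3, v3⟩|⟨d3, v3⟩⟩|⟨k3, v3⟩) <;>
            omega
          · obtain ⟨t, rfl⟩ : ∃ t, s = t + 1 := ⟨s - 1, by omega⟩
            simp only [Nat.add_sub_cancel] at S1 ⊢
            rcases S0 with (⟨k0, r0, ⟨d0, v0⟩|⟨d0, v0⟩⟩|⟨k0, v0⟩) <;>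
            rcases S1 with (⟨k1, r1, ⟨d1, v1⟩|⟨d1, v1⟩⟩|⟨k1, v1⟩) <;>
            rcases S2 with (⟨k2, r2, ⟨d2, v2⟩|⟨d2, v2⟩⟩|⟨k2, v2⟩) <;>
            rcases S3 with (⟨k3, r3, ⟨d3, v3⟩|⟨d3, v3⟩⟩|⟨k3, v3⟩) <;>
            omega
          · obtain rfl : s = 0 := by omega
            clear S1
            rcases S0 with (⟨k0, r0, ⟨d0, v0⟩|⟨d0, v0⟩⟩|⟨k0, v0⟩) <;>
            rcases S2 with (⟨k2, r2, ⟨d2, v2⟩|⟨d2, v2⟩⟩|⟨k2, v2⟩) <;>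
            rcases S3 with (⟨k3, r3, ⟨d3, v3⟩|⟨d3, v3⟩⟩|⟨k3, v3⟩) <;>
            omega
        · rw [Hk_eq_zero (q := q) (s := s) (by omega),
            Hk_eq_zero (q := q) (s := s + 1) (by push_cast; omega),
            Hk_eq_zero (q := q + 1) (s := s) (by omega)]
          split_ifs with hn1 h0
          · rw [Hk_eq_zero (q := q + 1) (s := s - 1) (by omega)]; simp
          · simp
          · rw [Hk_eq_zero (q := q + 1) (s := s - 1) (by omega)]; simp
          · simp
      · rw [if_neg hsn]
        obtain rfl : s = n := by omega
        clear ih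
        by_cases he : (m + 2 : ℤ) = 2 * p + r - 2 * q - s
        · obtain ⟨u, rfl⟩ : ∃ u, s = u + 1 := ⟨s - 1, by omega⟩
          have S0 := Hk_spec (u + 1) p r (m + 2) q (u + 1)
          have S1 := Hk_spec (u + 1) p r (m + 1) (q + 1) u
          have S2 := Hk_spec (u + 1) p r m (q + 1) (u + 1)
          simp only [Nat.add_sub_cancel]
          rw [if_pos (by omega : 0 < u + 1)]
          rcases S0 with (⟨k0, r0, ⟨d0, v0⟩|⟨d0, v0⟩⟩|⟨k0, v0⟩) <;>
          rcases S1 with (⟨k1, r1, ⟨d1, v1⟩|⟨d1, v1⟩⟩|⟨k1, v1⟩) <;>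
          rcases S2 with (⟨k2, r2, ⟨d2, v2⟩|⟨d2, v2⟩⟩|⟨k2, v2⟩) <;>
          omega
        · rw [Hk_eq_zero (q := q) (s := s) (by omega),
            Hk_eq_zero (q := q + 1) (s := s) (by omega)]
          split_ifs with h0
          · rw [Hk_eq_zero (q := q + 1) (s := s - 1) (by omega)]; simp
          · simp

lemma tot (n : ℕ) (hn : 1 ≤ n) (p : ℤ) (r : ℕ) (hr : r ≤ n) (q : ℤ) (s : ℕ) (hy : s ≤ n) :
    hTotB n (q, s) (p, r) = Hk n p r (2 * p + r - 2 * q - s).toNat (q, s) := by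
  unfold hTotB
  rw [finsum_congr fun k => key n hn p r hr k (q, s) hy]
  exact finsum_eq_single _ _ fun k hk => Hk_eq_zero (by omega)

/-- Hammock region for `ℤB_{n+1}` (Figure 7): for a vertex `x = (p,r)`,
`H(x)` is the union of
`{(q,s) : p-n ≤ q ≤ p+r-n and p+r-n ≤ q+s ≤ p+r}` and
`{(q,s) : p+r-n < q ≤ p and p ≤ q+s ≤ p+r}`. -/
theorem hammock_ZB (n : ℕ) (hn : 1 ≤ n) (p : ℤ) (r : ℕ) (hr : r ≤ n) :
    {y : ℤ × ℕ | y.2 ≤ n ∧ 0 < hTotB n y (p, r)} =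
      {y : ℤ × ℕ | y.2 ≤ n ∧ p - (n : ℤ) ≤ y.1 ∧ y.1 ≤ p + (r : ℤ) - (n : ℤ) ∧
          p + (r : ℤ) - (n : ℤ) ≤ y.1 + (y.2 : ℤ) ∧ y.1 + (y.2 : ℤ) ≤ p + (r : ℤ)} ∪
        {y : ℤ × ℕ | y.2 ≤ n ∧ p + (r : ℤ) - (n : ℤ) < y.1 ∧ y.1 ≤ p ∧
          p ≤ y.1 + (y.2 : ℤ) ∧ y.1 + (y.2 : ℤ) ≤ p + (r : ℤ)} := by
  ext ⟨q, s⟩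
  simp only [Set.mem_setOf_eq, Set.mem_union]
  have S := Hk_spec n p r (2 * p + r - 2 * q - s).toNat q s
  constructor
  · rintro ⟨hsn, hpos⟩
    rw [tot n hn p r hr q s hsn] at hpos
    omega
  · intro h
    have hsn : s ≤ n := by omega
    refine ⟨hsn, ?_⟩
    rw [tot n hn p r hr q s hsn]
    omega
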